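/- Replacing a prefix of a multiple-source earliest-arrival path (MSEAP) to y with any MSEAP to the prefix's endpoint yields a valid temporal path that is still a MSEAP to y, and in which the arrival times at all vertices of the retained suffix are unchanged. -/

import Mathlib

/-!
The prefix `A` is itself a path to `w`, so the earliest-arrival path `Q` reaches `w` no later
than `A` does; hence every edge of `C` can still be taken after `Q`. Once the suffix is nonempty,
the arrival time of `Q ++ C` is that of its suffix, hence equal to that of `A ++ C`; when `C` is
empty, `Q ++ C = Q` arrives no later than `A`. Either way `Q ++ C` is no later than the
earliest-arrival path `A ++ C`.
-/

open scoped Classical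

structure TEdge (V : Type) where
  src : V
  dst : V
  t : ℝ
  len : ℝ

variable {V : Type}

def compat (e f : TEdge V) : Prop := e.dst = f.src ∧ e.t + e.len ≤ f.t

def IsPath (E : Set (TEdge V)) (x y : V) (p : List (TEdge V)) : Prop :=
  p ≠ [] ∧ (∀ e ∈ p, e ∈ E) ∧ p.head?.map TEdge.src = some x ∧
    p.getLast?.map TEdge.dst = some y ∧ List.Chain' compat p

def startT (p : List (TEdge V)) : ℝ := ((p.head?).map TEdge.t).getD 0

def endT (p : List (TEdge V)) : ℝ := ((p.getLast?).map (fun e => e.t + e.len)).getD 0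

def distT (p : List (TEdge V)) : ℝ := (p.map TEdge.len).sum

def IsMSEAP (E : Set (TEdge V)) (init : V → EReal) (p : List (TEdge V)) (y : V) : Prop :=
  (∃ x, IsPath E x y p ∧ init x ≤ (startT p : EReal)) ∧
  ∀ p' x', IsPath E x' y p' → init x' ≤ (startT p' : EReal) → endT p ≤ endT p'

lemma startT_append_of_ne_nil {A : List (TEdge V)} (B : List (TEdge V)) (hA : A ≠ []) :
    startT (A ++ B) = startT A := by
  unfold startT
  rw [List.head?_append, Option.or_of_isSome (by simpa using hA)]

lemma endT_append_of_ne_nil (A : List (TEdge V)) {B : List (TEdge V)} (hB : B ≠ []) :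
    endT (A ++ B) = endT B := by
  unfold endT
  rw [List.getLast?_append, Option.or_of_isSome (by simpa using hB)]

lemma endT_append_le_endT_append {Q A : List (TEdge V)} (C : List (TEdge V))
    (hle : endT Q ≤ endT A) : endT (Q ++ C) ≤ endT (A ++ C) := by
  rcases C.eq_nil_or_concat' with rfl | ⟨C', c, rfl⟩
  · simpa using hle
  · simp only [endT_append_of_ne_nil _ (List.concat_ne_nil c C'), le_refl]

lemma getLast?_map_dst_append_congr {Q A : List (TEdge V)} (C : List (TEdge V))
    (h : Q.getLast?.map TEdge.dst = A.getLast?.map TEdge.dst) :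
    (Q ++ C).getLast?.map TEdge.dst = (A ++ C).getLast?.map TEdge.dst := by
  simp only [List.getLast?_append, Option.map_or, h]

lemma compat_of_dst_eq_of_arrival_le {q a f : TEdge V} (hdst : q.dst = a.dst)
    (harr : q.t + q.len ≤ a.t + a.len) (h : compat a f) : compat q f :=
  ⟨hdst.trans h.1, harr.trans h.2⟩

lemma isChain_compat_append_of_endT_le {Q A C : List (TEdge V)} (hQ : List.IsChain compat Q)
    (hAC : List.IsChain compat (A ++ C)) (hA : A ≠ [])
    (hdst : Q.getLast?.map TEdge.dst = A.getLast?.map TEdge.dst) (hle : endT Q ≤ endT A) :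
    List.IsChain compat (Q ++ C) := by
  obtain ⟨-, hC, hlink⟩ := List.isChain_append.mp hAC
  refine List.isChain_append.mpr ⟨hQ, hC, fun q hq f hf => ?_⟩
  have ha := List.getLast?_eq_getLast_of_ne_nil hA
  rw [Option.mem_def] at hq
  simp only [hq, ha, Option.map_some, Option.some.injEq] at hdst
  have harr : q.t + q.len ≤ (A.getLast hA).t + (A.getLast hA).len := by
    simpa [endT, hq, ha] using hle
  exact compat_of_dst_eq_of_arrival_le hdst harr (hlink _ ha f hf)

lemma IsPath.of_append_left {E : Set (TEdge V)} {x y w : V} {A C : List (TEdge V)}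
    (h : IsPath E x y (A ++ C)) (hA : A ≠ []) (hw : A.getLast?.map TEdge.dst = some w) :
    IsPath E x w A := by
  obtain ⟨-, hE, hhead, -, hchain⟩ := h
  refine ⟨hA, fun e he => hE e (List.mem_append_left _ he), ?_, hw, hchain.left_of_append⟩
  rwa [List.head?_append, Option.or_of_isSome (by simpa using hA)] at hhead

lemma IsPath.append_of_replace_prefix {E : Set (TEdge V)} {x x' y w : V}
    {A C Q : List (TEdge V)} (hP : IsPath E x y (A ++ C)) (hA : A ≠ [])
    (hw : A.getLast?.map TEdge.dst = some w) (hQ : IsPath E x' w Q) (hle : endT Q ≤ endT A) :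
    IsPath E x' y (Q ++ C) := by
  obtain ⟨-, hE, -, hlast, hchain⟩ := hP
  obtain ⟨hQne, hQE, hQhead, hQlast, hQchain⟩ := hQ
  refine ⟨by simp [hQne], fun e he => ?_, ?_, ?_,
    isChain_compat_append_of_endT_le hQchain hchain hA (hQlast.trans hw.symm) hle⟩
  · rcases List.mem_append.mp he with h | h
    · exact hQE e h
    · exact hE e (List.mem_append_right _ h)
  · rwa [List.head?_append, Option.or_of_isSome (by simpa using hQne)]
  · rwa [getLast?_map_dst_append_congr C (hQlast.trans hw.symm)]

lemma IsMSEAP.of_isPath_of_endT_le {E : Set (TEdge V)} {init : V → EReal} {x : V}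
    {p q : List (TEdge V)} {y : V} (hp : IsMSEAP E init p y) (hq : IsPath E x y q)
    (hx : init x ≤ (startT q : EReal)) (hle : endT q ≤ endT p) : IsMSEAP E init q y :=
  ⟨⟨x, hq, hx⟩, fun p' x' hp' hx' => hle.trans (hp.2 p' x' hp' hx')⟩

/-- Replacing a prefix `A` of a MSEAP `A ++ C` to `y` with any MSEAP `Q` to the
prefix's endpoint `w` yields a valid temporal path that is still a MSEAP to `y`,
with unchanged arrival times along the retained suffix `C`. -/
theorem stmt17 (E : Set (TEdge V)) (init : V → EReal) (y w : V)
    (A C Q : List (TEdge V))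
    (hA : A ≠ []) (hw : A.getLast?.map TEdge.dst = some w)
    (hP : IsMSEAP E init (A ++ C) y)
    (hQ : IsMSEAP E init Q w) :
    List.Chain' compat (Q ++ C) ∧ IsMSEAP E init (Q ++ C) y ∧
    ∀ D, D ≠ [] → D <+: C → endT (Q ++ D) = endT (A ++ D) := by
  obtain ⟨x, hPx, hPi⟩ := hP.1
  obtain ⟨⟨xq, hQx, hQi⟩, hQmin⟩ := hQ
  have hle : endT Q ≤ endT A :=
    hQmin A x (hPx.of_append_left hA hw) (by rwa [startT_append_of_ne_nil C hA] at hPi)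
  have hQC : IsPath E xq y (Q ++ C) := hPx.append_of_replace_prefix hA hw hQx hle
  refine ⟨hQC.2.2.2.2, hP.of_isPath_of_endT_le hQC ?_ (endT_append_le_endT_append C hle), ?_⟩
  · rwa [startT_append_of_ne_nil C hQx.1]
  · intro D hD _
    rw [endT_append_of_ne_nil Q hD, endT_append_of_ne_nil A hD]
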